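/- Let d ≥ 1, r ≥ 0 be integers and 0 < ρ ≤ 1. There is a constant G, depending only on d, r and ρ, with the following property. Let f : ℝ^d → ℝ be r-times continuously differentiable on a neighborhood of [0,1]^d with |f(x)| ≤ 1 on [0,1]^d and with r-th Fréchet derivative satisfying ‖D^r f(x) − D^r f(y)‖ ≤ ‖x−y‖^ρ for all x, y ∈ [0,1]^d. Let n ≥ 1, and for each multi-index i = (i_1,…,i_d) ∈ {1,…,n}^d let K^i = Π_{j=1}^d [(i_j−1)/n, i_j/n] with center t^i, let w^i(t) = Σ_{k=0}^{r} (1/k!) D^k f(t^i)[(t−t^i), …, (t−t^i)], and let m_i = max_{t ∈ K^i} w^i(t). If real numbers m̃_i satisfy |m̃_i − m_i| ≤ (1/n)^{r+ρ} for all i, then |max_{t ∈ [0,1]^d} f(t) − max_i m̃_i| ≤ G·(1/n)^{r+ρ}. -/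

import Mathlib

open Set

variable {E F : Type*} [NormedAddCommGroup E] [NormedSpace ℝ E]
  [NormedAddCommGroup F] [NormedSpace ℝ F]

lemma my_fderiv_comp_add_left (H : E → F) (c x : E) :
    fderiv ℝ (fun y => H (c + y)) x = fderiv ℝ H (c + x) := by
  by_cases h : DifferentiableAt ℝ H (c + x)
  · have h1 : HasFDerivAt (fun y => H (c + y)) (fderiv ℝ H (c + x)) x := by
      have := h.hasFDerivAt.comp x ((hasFDerivAt_id x).const_add c)
      simpa [Function.comp_def] using this
    exact h1.fderiv
  · have h2 : ¬ DifferentiableAt ℝ (fun y => H (c + y)) x := by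
      intro hcon
      have h3 : DifferentiableAt ℝ (fun z => H (c + (z - c))) (c + x) := by
        have hcon' : DifferentiableAt ℝ (fun y => H (c + y)) (id (c + x) - c) := by
          simpa using hcon
        exact DifferentiableAt.comp (g := fun y => H (c + y)) (c + x) hcon' ((differentiableAt_id (𝕜 := ℝ) (x := c + x)).sub_const c)
      apply h
      have : (fun z => H (c + (z - c))) = H := by
        funext z; rw [add_sub_cancel]
      rwa [this] at h3
    rw [fderiv_zero_of_not_differentiableAt h, fderiv_zero_of_not_differentiableAt h2]

lemma my_iteratedFDeriv_comp_add_left (k : ℕ) (H : E → F) (c : E) :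
    (fun x => iteratedFDeriv ℝ k (fun y => H (c + y)) x)
      = fun x => iteratedFDeriv ℝ k H (c + x) := by
  induction k with
  | zero => funext x; ext m; simp
  | succ k IH =>
    funext x; ext m
    rw [iteratedFDeriv_succ_apply_left, iteratedFDeriv_succ_apply_left]
    have h1 : fderiv ℝ (iteratedFDeriv ℝ k (fun y => H (c + y))) x
        = fderiv ℝ (fun x => iteratedFDeriv ℝ k H (c + x)) x := by
      rw [show (iteratedFDeriv ℝ k fun y => H (c + y))
          = fun x => iteratedFDeriv ℝ k H (c + x) from IH]
    rw [h1, my_fderiv_comp_add_left (iteratedFDeriv ℝ k H) c x]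

lemma my_iteratedFDerivWithin_eq_of_subset_open {g : E → F} {U s : Set E} {N : WithTop ℕ∞} {n : ℕ}
    (hg : ContDiffOn ℝ N g U) (hU : IsOpen U) (hs : UniqueDiffOn ℝ s) (hsub : s ⊆ U)
    {x : E} (hx : x ∈ s) (hn : (n : WithTop ℕ∞) ≤ N) :
    iteratedFDerivWithin ℝ n g s x = iteratedFDeriv ℝ n g x := by
  have h1 : iteratedFDerivWithin ℝ n g s x = iteratedFDerivWithin ℝ n g U x :=
    (((hg.ftaylorSeriesWithin hU.uniqueDiffOn).mono hsub).eq_iteratedFDerivWithin_of_uniqueDiffOn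
      hn hs hx).symm
  rw [h1, iteratedFDerivWithin_of_isOpen n hU (hsub hx)]


lemma my_line_deriv {d r : ℕ} {f : (Fin d → ℝ) → ℝ} {V : Set (Fin d → ℝ)} (hV : IsOpen V)
    (hf : ContDiffOn ℝ r f V) (c v : Fin d → ℝ)
    (hseg : ∀ s : ℝ, s ∈ Icc (0:ℝ) 1 → c + s • v ∈ V) {k : ℕ} (hk : k ≤ r)
    {s : ℝ} (hs : s ∈ Icc (0:ℝ) 1) :
    iteratedDerivWithin k (fun s : ℝ => f (c + s • v)) (Icc (0:ℝ) 1) s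
      = iteratedFDerivWithin ℝ k f V (c + s • v) (fun _ => v) := by
  set f₁ : (Fin d → ℝ) → ℝ := fun y => f (c + y) with hf₁def
  set V₁ : Set (Fin d → ℝ) := (fun y : Fin d → ℝ => c + y) ⁻¹' V with hV₁def
  have hV₁ : IsOpen V₁ := hV.preimage (continuous_const.add continuous_id)
  have hf₁ : ContDiffOn ℝ r f₁ V₁ :=
    hf.comp ((contDiff_const.add contDiff_id).contDiffOn) (fun y hy => hy)
  set L : ℝ →L[ℝ] (Fin d → ℝ) := ContinuousLinearMap.toSpanSingleton ℝ v with hLdef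
  have hLapp : ∀ t : ℝ, L t = t • v := fun t => ContinuousLinearMap.toSpanSingleton_apply ℝ v t
  set U : Set ℝ := L ⁻¹' V₁ with hUdef
  have hU : IsOpen U := hV₁.preimage L.continuous
  have hIccU : Icc (0:ℝ) 1 ⊆ U := by
    intro t ht
    have : c + L t ∈ V := by rw [hLapp]; exact hseg t ht
    exact this
  have hgU : ContDiffOn ℝ r (f₁ ∘ L) U := hf₁.comp_continuousLinearMap L
  have hgeq : (f₁ ∘ L) = fun s : ℝ => f (c + s • v) := by
    funext t; simp [Function.comp, hLapp, hf₁def]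
  have hkle : (k : WithTop ℕ∞) ≤ (r : WithTop ℕ∞) := by exact_mod_cast hk
  have hsU : s ∈ U := hIccU hs
  have h1 : iteratedDerivWithin k (fun s : ℝ => f (c + s • v)) (Icc (0:ℝ) 1) s
      = iteratedFDeriv ℝ k (f₁ ∘ L) s (fun _ => 1) := by
    rw [iteratedDerivWithin_eq_iteratedFDerivWithin, ← hgeq,
      my_iteratedFDerivWithin_eq_of_subset_open hgU hU (uniqueDiffOn_Icc zero_lt_one) hIccU hs hkle]
  have h2 : iteratedFDeriv ℝ k (f₁ ∘ L) s = iteratedFDerivWithin ℝ k (f₁ ∘ L) U s :=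
    (iteratedFDerivWithin_of_isOpen k hU hsU).symm
  have h3 : iteratedFDerivWithin ℝ k (f₁ ∘ L) U s
      = (iteratedFDerivWithin ℝ k f₁ V₁ (L s)).compContinuousLinearMap fun _ => L :=
    L.iteratedFDerivWithin_comp_right hf₁ hV₁.uniqueDiffOn hU.uniqueDiffOn hsU hkle
  have hsv : s • v ∈ V₁ := by have := hsU; rwa [hUdef, Set.mem_preimage, hLapp] at this
  have h4 : iteratedFDerivWithin ℝ k f₁ V₁ (s • v) = iteratedFDeriv ℝ k f₁ (s • v) :=
    iteratedFDerivWithin_of_isOpen k hV₁ hsv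
  have h5 : iteratedFDeriv ℝ k f₁ (s • v) = iteratedFDeriv ℝ k f (c + s • v) :=
    congrFun (my_iteratedFDeriv_comp_add_left k f c) (s • v)
  have h6 : iteratedFDeriv ℝ k f (c + s • v) = iteratedFDerivWithin ℝ k f V (c + s • v) :=
    (iteratedFDerivWithin_of_isOpen k hV (hseg s hs)).symm
  rw [h1, h2, h3]
  rw [ContinuousMultilinearMap.compContinuousLinearMap_apply]
  rw [hLapp s, h4, h5, h6]
  congr 1
  funext i
  rw [hLapp]
  simp

lemma my_taylor_bound {d r : ℕ} {ρ : ℝ} (hρ : 0 < ρ)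
    {f : (Fin d → ℝ) → ℝ} {V : Set (Fin d → ℝ)} (hV : IsOpen V)
    (hIV : Icc (0 : Fin d → ℝ) 1 ⊆ V) (hf : ContDiffOn ℝ r f V)
    (hHol : ∀ x ∈ Icc (0 : Fin d → ℝ) 1, ∀ y ∈ Icc (0 : Fin d → ℝ) 1,
      ‖iteratedFDerivWithin ℝ r f V x - iteratedFDerivWithin ℝ r f V y‖ ≤ ‖x - y‖ ^ ρ)
    {c t : Fin d → ℝ} (hc : c ∈ Icc (0 : Fin d → ℝ) 1) (ht : t ∈ Icc (0 : Fin d → ℝ) 1) :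
    |f t - ∑ k ∈ Finset.range (r + 1),
        (1 / (Nat.factorial k : ℝ)) * iteratedFDerivWithin ℝ k f V c (fun _ => t - c)|
      ≤ ‖t - c‖ ^ r * ‖t - c‖ ^ ρ := by
  have hseg' : ∀ s : ℝ, s ∈ Icc (0:ℝ) 1 → c + s • (t - c) ∈ Icc (0 : Fin d → ℝ) 1 := by
    intro s hs
    obtain ⟨hs0, hs1⟩ := hs
    constructor <;> intro j
    · have h1 := hc.1 j; have h2 := hc.2 j; have h3 := ht.1 j; have h4 := ht.2 j
      simp only [Pi.add_apply, Pi.smul_apply, Pi.sub_apply, smul_eq_mul, Pi.zero_apply,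
        Pi.one_apply] at *
      nlinarith [mul_nonneg (sub_nonneg.mpr hs1) h1, mul_nonneg hs0 h3]
    · have h1 := hc.1 j; have h2 := hc.2 j; have h3 := ht.1 j; have h4 := ht.2 j
      simp only [Pi.add_apply, Pi.smul_apply, Pi.sub_apply, smul_eq_mul, Pi.zero_apply,
        Pi.one_apply] at *
      nlinarith [mul_nonneg (sub_nonneg.mpr hs1) (sub_nonneg.mpr h2),
        mul_nonneg hs0 (sub_nonneg.mpr h4)]
  rcases Nat.eq_zero_or_eq_succ_pred r with hr0 | hrs
  · subst hr0
    have hsum0 : ∑ k ∈ Finset.range (0 + 1),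
        (1 / (Nat.factorial k : ℝ)) * iteratedFDerivWithin ℝ k f V c (fun _ => t - c) = f c := by
      simp
    rw [hsum0, pow_zero, one_mul]
    have h0 := hHol t ht c hc
    have hle : |f t - f c|
        ≤ ‖iteratedFDerivWithin ℝ 0 f V t - iteratedFDerivWithin ℝ 0 f V c‖ := by
      have h1 := (iteratedFDerivWithin ℝ 0 f V t - iteratedFDerivWithin ℝ 0 f V c).le_opNorm
        (fun _ => (0 : Fin d → ℝ))
      simp only [ContinuousMultilinearMap.sub_apply, iteratedFDerivWithin_zero_apply,
        Finset.univ_eq_empty, Finset.prod_empty, mul_one, Real.norm_eq_abs] at h1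
      exact h1
    exact hle.trans h0
  · obtain ⟨q, rfl⟩ : ∃ q, r = q + 1 := ⟨r - 1, hrs⟩
    set v : Fin d → ℝ := t - c with hvdef
    set g : ℝ → ℝ := fun s => f (c + s • v) with hgdef
    have hseg : ∀ s : ℝ, s ∈ Icc (0:ℝ) 1 → c + s • v ∈ V := fun s hs => hIV (hseg' s hs)
    have hder : ∀ k, k ≤ q + 1 → ∀ s ∈ Icc (0:ℝ) 1,
        iteratedDerivWithin k g (Icc (0:ℝ) 1) s
          = iteratedFDerivWithin ℝ k f V (c + s • v) (fun _ => v) :=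
      fun k hk s hs => my_line_deriv hV hf c v hseg hk hs
    have hinner : ContDiff ℝ (q + 1 : ℕ) (fun s : ℝ => c + s • v) :=
      contDiff_const.add (contDiff_id.smul contDiff_const)
    have hgC : ContDiffOn ℝ (q + 1 : ℕ) g (Icc (0:ℝ) 1) :=
      hf.comp hinner.contDiffOn (fun s hs => hseg s hs)
    have hq : ContDiffOn ℝ q g (Icc (0:ℝ) 1) :=
      hgC.of_le (by exact_mod_cast Nat.le_succ q)
    have hdiff : DifferentiableOn ℝ (iteratedDerivWithin q g (Icc (0:ℝ) 1)) (Ioo (0:ℝ) 1) :=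
      (hgC.differentiableOn_iteratedDerivWithin (by exact_mod_cast lt_add_one q)
        (uniqueDiffOn_Icc zero_lt_one)).mono Ioo_subset_Icc_self
    obtain ⟨x', hx', hEq⟩ := taylor_mean_remainder_lagrange (n := q) (x₀ := 0) (x := 1) zero_ne_one
      (by rwa [Set.uIcc_of_le zero_le_one]) (by rwa [Set.uIcc_of_le zero_le_one, Set.uIoo_of_le zero_le_one])
    rw [Set.uIcc_of_le zero_le_one] at hEq; rw [Set.uIoo_of_le zero_le_one] at hx'
    set m : Fin (q + 1) → (Fin d → ℝ) := fun _ => v with hmdef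
    set A := iteratedFDerivWithin ℝ (q + 1) f V (c + x' • v) with hAdef
    set B := iteratedFDerivWithin ℝ (q + 1) f V c with hBdef
    have hg1 : g 1 = f t := by
      simp only [hgdef, one_smul, hvdef, add_sub_cancel]
    have hc0 : c + (0:ℝ) • v = c := by rw [zero_smul, add_zero]
    have hT : taylorWithinEval g q (Icc (0:ℝ) 1) 0 1
        = ∑ k ∈ Finset.range (q + 1),
            (1 / (Nat.factorial k : ℝ)) * iteratedFDerivWithin ℝ k f V c (fun _ => v) := by
      rw [taylor_within_apply]
      refine Finset.sum_congr rfl fun k hk => ?_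
      have hkq : k ≤ q + 1 := by
        have := Finset.mem_range.mp hk; omega
      rw [hder k hkq 0 (left_mem_Icc.mpr zero_le_one), hc0]
      rw [smul_eq_mul]
      ring_nf
    have hrem : iteratedDerivWithin (q + 1) g (Icc (0:ℝ) 1) x' = A m :=
      hder (q + 1) le_rfl x' (Ioo_subset_Icc_self hx')
    have hkey : f t - ∑ k ∈ Finset.range (q + 1 + 1),
          (1 / (Nat.factorial k : ℝ)) * iteratedFDerivWithin ℝ k f V c (fun _ => t - c)
        = ((Nat.factorial (q + 1) : ℝ))⁻¹ * (A m - B m) := by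
      have hsum : ∑ k ∈ Finset.range (q + 1 + 1),
            (1 / (Nat.factorial k : ℝ)) * iteratedFDerivWithin ℝ k f V c (fun _ => t - c)
          = (∑ k ∈ Finset.range (q + 1),
              (1 / (Nat.factorial k : ℝ)) * iteratedFDerivWithin ℝ k f V c (fun _ => v))
            + (1 / (Nat.factorial (q + 1) : ℝ)) * B m := by
        rw [Finset.sum_range_succ]
      rw [hg1, hrem, sub_zero, one_pow, mul_one] at hEq
      have hfac : (0:ℝ) < (Nat.factorial (q + 1) : ℝ) := by
        exact_mod_cast Nat.factorial_pos (q + 1)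
      have hft : f t = taylorWithinEval g q (Icc (0:ℝ) 1) 0 1
          + A m / (Nat.factorial (q + 1) : ℝ) := by linarith [hEq]
      rw [hsum, ← hT, hft]
      field_simp
      ring
    rw [hkey]
    have hABm : |A m - B m| ≤ ‖A - B‖ * ‖v‖ ^ (q + 1) := by
      have h1 := (A - B).le_opNorm m
      simp only [ContinuousMultilinearMap.sub_apply, Real.norm_eq_abs] at h1
      calc |A m - B m| ≤ ‖A - B‖ * ∏ _i : Fin (q + 1), ‖v‖ := h1
        _ = ‖A - B‖ * ‖v‖ ^ (q + 1) := by
            rw [Finset.prod_const, Finset.card_univ, Fintype.card_fin]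
    have hAB : ‖A - B‖ ≤ ‖v‖ ^ ρ := by
      have h2 := hHol (c + x' • v) (hseg' x' (Ioo_subset_Icc_self hx')) c hc
      have h3 : ‖(c + x' • v) - c‖ = ‖x' • v‖ := by rw [add_sub_cancel_left]
      rw [h3] at h2
      refine h2.trans ?_
      apply Real.rpow_le_rpow (norm_nonneg _) ?_ hρ.le
      rw [norm_smul, Real.norm_eq_abs]
      have hx1 : |x'| ≤ 1 := by
        rw [abs_le]; exact ⟨by linarith [hx'.1], hx'.2.le⟩
      nlinarith [norm_nonneg v]
    have hfacinv : ((Nat.factorial (q + 1) : ℝ))⁻¹ ≤ 1 := by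
      rw [inv_le_one_iff₀]
      right
      exact_mod_cast Nat.one_le_iff_ne_zero.mpr (Nat.factorial_pos (q+1)).ne'
    have hρnn : (0:ℝ) ≤ ‖v‖ ^ ρ := Real.rpow_nonneg (norm_nonneg _) _
    calc |((Nat.factorial (q + 1) : ℝ))⁻¹ * (A m - B m)|
        = ((Nat.factorial (q + 1) : ℝ))⁻¹ * |A m - B m| := by
          rw [abs_mul, abs_of_nonneg (by positivity)]
      _ ≤ 1 * (‖A - B‖ * ‖v‖ ^ (q + 1)) := by
          apply mul_le_mul hfacinv hABm (abs_nonneg _)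
          norm_num
      _ ≤ 1 * (‖v‖ ^ ρ * ‖v‖ ^ (q + 1)) := by
          apply mul_le_mul_of_nonneg_left ?_ (by norm_num)
          exact mul_le_mul_of_nonneg_right hAB (by positivity)
      _ = ‖v‖ ^ (q + 1) * ‖v‖ ^ ρ := by ring

lemma my_sup_lemma {α : Type*} [TopologicalSpace α] {S : Set α} (hS : S.Nonempty)
    (hSc : IsCompact S) {F G : α → ℝ} (hF : ContinuousOn F S) (hG : ContinuousOn G S)
    {ε : ℝ} (h : ∀ x ∈ S, |F x - G x| ≤ ε) :
    |sSup (F '' S) - sSup (G '' S)| ≤ ε := by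
  have hFc : IsCompact (F '' S) := hSc.image_of_continuousOn hF
  have hGc : IsCompact (G '' S) := hSc.image_of_continuousOn hG
  have hFne : (F '' S).Nonempty := hS.image F
  have hGne : (G '' S).Nonempty := hS.image G
  rw [abs_sub_le_iff]
  constructor
  · obtain ⟨x, hx, hxe⟩ := hFc.sSup_mem hFne
    have h1 : G x ≤ sSup (G '' S) := le_csSup hGc.bddAbove ⟨x, hx, rfl⟩
    have h2 := (abs_le.mp (h x hx)).2
    linarith [hxe ▸ h2]
  · obtain ⟨x, hx, hxe⟩ := hGc.sSup_mem hGne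
    have h1 : F x ≤ sSup (F '' S) := le_csSup hFc.bddAbove ⟨x, hx, rfl⟩
    have h2 := (abs_le.mp (h x hx)).1
    linarith [hxe ▸ h2]

lemma my_exists_cube {d n : ℕ} (hn : 1 ≤ n) {x : Fin d → ℝ}
    (hx : x ∈ Icc (0 : Fin d → ℝ) 1) :
    ∃ i : Fin d → Fin n,
      x ∈ Icc (fun j => (i j : ℝ) / n) (fun j => ((i j : ℝ) + 1) / n) := by
  have hnp : (0:ℝ) < n := by exact_mod_cast hn
  refine ⟨fun j => ⟨min (Nat.floor (x j * n)) (n - 1), by omega⟩, ?_, ?_⟩ <;> intro j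
  · show ((min (Nat.floor (x j * n)) (n - 1) : ℕ) : ℝ) / n ≤ x j
    have h0 : 0 ≤ x j := hx.1 j
    have hfl : ((min (Nat.floor (x j * n)) (n - 1) : ℕ) : ℝ) ≤ x j * n := by
      calc ((min (Nat.floor (x j * n)) (n - 1) : ℕ) : ℝ)
          ≤ ((Nat.floor (x j * n) : ℕ) : ℝ) := by
            exact_mod_cast min_le_left _ _
        _ ≤ x j * n := Nat.floor_le (by positivity)
    rw [div_le_iff₀ hnp]
    linarith
  · show x j ≤ (((min (Nat.floor (x j * n)) (n - 1) : ℕ) : ℝ) + 1) / n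
    rcases le_or_gt (Nat.floor (x j * n)) (n - 1) with hcase | hcase
    · rw [min_eq_left hcase, le_div_iff₀ hnp]
      have h2 := Nat.lt_floor_add_one (x j * n)
      push_cast
      linarith
    · rw [min_eq_right (by omega : n - 1 ≤ Nat.floor (x j * n)), le_div_iff₀ hnp,
        Nat.cast_sub hn]
      have h1 : x j ≤ 1 := hx.2 j
      push_cast
      nlinarith [mul_le_mul_of_nonneg_right h1 hnp.le]

/-- Error bound for the maximum-search algorithm on the uniform partition of `[0,1]^d`
into `n^d` subcubes: there is a constant `G = G(d, r, ρ)` such that for any `f` in the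
Hölder class `F_d^{r,ρ}` (defined on an open neighborhood `V` of `[0,1]^d`), and any
numbers `m̃ i` approximating the maxima `m_i` of the degree-`r` Taylor polynomials
`wⁱ` of `f` centered at the cube centers `tⁱ` to within `(1/n)^{r+ρ}`, one has
`|max_{[0,1]^d} f − max_i m̃ i| ≤ G (1/n)^{r+ρ}`.

For a multi-index `i : Fin d → Fin n`, the cube is
`Kⁱ = Π_j [(i j)/n, (i j + 1)/n]` with center `tⁱ = (fun j => ((i j) + 1/2)/n)`. -/
theorem max_search_algorithm_error_bound
    (d r : ℕ) (hd : 1 ≤ d) (ρ : ℝ) (hρ : 0 < ρ) (hρ1 : ρ ≤ 1) :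
    ∃ G : ℝ, ∀ (f : (Fin d → ℝ) → ℝ) (V : Set (Fin d → ℝ)),
      IsOpen V → Set.Icc (0 : Fin d → ℝ) 1 ⊆ V → ContDiffOn ℝ r f V →
      (∀ x ∈ Set.Icc (0 : Fin d → ℝ) 1, |f x| ≤ 1) →
      (∀ x ∈ Set.Icc (0 : Fin d → ℝ) 1, ∀ y ∈ Set.Icc (0 : Fin d → ℝ) 1,
        ‖iteratedFDerivWithin ℝ r f V x - iteratedFDerivWithin ℝ r f V y‖
          ≤ ‖x - y‖ ^ ρ) →
      ∀ n : ℕ, 1 ≤ n →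
      ∀ mt : (Fin d → Fin n) → ℝ,
        (∀ i : Fin d → Fin n,
          let c : Fin d → ℝ := fun j => ((i j : ℝ) + 1 / 2) / n
          let Kc : Set (Fin d → ℝ) :=
            Set.Icc (fun j => (i j : ℝ) / n) (fun j => ((i j : ℝ) + 1) / n)
          let w : (Fin d → ℝ) → ℝ := fun t =>
            ∑ k ∈ Finset.range (r + 1),
              (1 / (Nat.factorial k : ℝ)) *
                iteratedFDerivWithin ℝ k f V c (fun _ => t - c)
          |mt i - sSup (w '' Kc)| ≤ ((1 : ℝ) / n) ^ ((r : ℝ) + ρ)) →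
        |sSup (f '' Set.Icc (0 : Fin d → ℝ) 1) - sSup (Set.range mt)|
          ≤ G * ((1 : ℝ) / n) ^ ((r : ℝ) + ρ) := by
  refine ⟨2, ?_⟩
  intro f V hV hIV hf hbound hHol n hn mt hmt
  have hnp : (0:ℝ) < n := by exact_mod_cast hn
  set ε : ℝ := ((1 : ℝ) / n) ^ ((r : ℝ) + ρ) with hεdef
  have hεpos : 0 < ε := Real.rpow_pos_of_pos (by positivity) _
  set c : (Fin d → Fin n) → Fin d → ℝ := fun i j => ((i j : ℝ) + 1 / 2) / n with hcdef
  set K : (Fin d → Fin n) → Set (Fin d → ℝ) :=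
    fun i => Set.Icc (fun j => (i j : ℝ) / n) (fun j => ((i j : ℝ) + 1) / n) with hKdef
  set W : (Fin d → Fin n) → (Fin d → ℝ) → ℝ := fun i t =>
    ∑ k ∈ Finset.range (r + 1),
      (1 / (Nat.factorial k : ℝ)) * iteratedFDerivWithin ℝ k f V (c i) (fun _ => t - c i)
    with hWdef
  have hmt' : ∀ i, |mt i - sSup (W i '' K i)| ≤ ε := fun i => hmt i
  have hfin : ∀ i : Fin d → Fin n, ∀ j, ((i j : ℕ) : ℝ) ≤ (n : ℝ) - 1 := by
    intro i j
    have : (i j : ℕ) ≤ n - 1 := by omega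
    have h2 : ((i j : ℕ) : ℝ) ≤ ((n - 1 : ℕ) : ℝ) := by exact_mod_cast this
    rwa [Nat.cast_sub hn, Nat.cast_one] at h2
  have hcmem : ∀ i, c i ∈ K i := by
    intro i
    constructor <;> intro j
    · show (i j : ℝ) / n ≤ ((i j : ℝ) + 1 / 2) / n
      gcongr
      linarith
    · show ((i j : ℝ) + 1 / 2) / n ≤ ((i j : ℝ) + 1) / n
      gcongr
      linarith
  have hKsub : ∀ i, K i ⊆ Set.Icc (0 : Fin d → ℝ) 1 := by
    intro i x hx
    constructor <;> intro j
    · have h1 := hx.1 j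
      have h2 : (0:ℝ) ≤ (i j : ℝ) / n := by positivity
      simpa using le_trans h2 h1
    · have h1 := hx.2 j
      have h3 := hfin i j
      have h4 : ((i j : ℝ) + 1) / n ≤ 1 := by
        rw [div_le_one hnp]; linarith
      simpa using le_trans h1 h4
  have hKcomp : ∀ i, IsCompact (K i) := fun i => isCompact_Icc
  have hKne : ∀ i, (K i).Nonempty := fun i => ⟨c i, hcmem i⟩
  have hfcont : ContinuousOn f (Set.Icc (0 : Fin d → ℝ) 1) := hf.continuousOn.mono hIV
  have hWcont : ∀ i, ContinuousOn (W i) (K i) := by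
    intro i
    apply Continuous.continuousOn
    apply continuous_finset_sum
    intro k _
    exact continuous_const.mul ((iteratedFDerivWithin ℝ k f V (c i)).cont.comp
      (continuous_pi fun _ => continuous_id.sub continuous_const))
  have hnormKc : ∀ i, ∀ t ∈ K i, ‖t - c i‖ ≤ 1 / n := by
    intro i t ht
    rw [pi_norm_le_iff_of_nonneg (by positivity)]
    intro j
    have h1 := ht.1 j
    have h2 := ht.2 j
    have e1 : ((i j : ℝ) + 1) / n = (i j : ℝ) / n + 1 / n := by ring
    have e2 : ((i j : ℝ) + 1 / 2) / n = (i j : ℝ) / n + (1 / 2) * (1 / n) := by ring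
    have h3 : (0:ℝ) < 1 / n := by positivity
    show |t j - ((i j : ℝ) + 1 / 2) / n| ≤ 1 / n
    rw [abs_le]
    constructor <;> [skip; skip] <;> simp only [] at h1 h2 <;> rw [e2] <;>
      [linarith [h1, h3]; linarith [h2, e1 ▸ h2, h3]]
  have hTay : ∀ i, ∀ t ∈ K i, |f t - W i t| ≤ ε := by
    intro i t ht
    have h0 := my_taylor_bound hρ hV hIV hf hHol (hKsub i (hcmem i)) (hKsub i ht)
    refine h0.trans ?_
    have hnorm := hnormKc i t ht
    have hsplit : ε = ((1:ℝ)/n) ^ (r : ℕ) * ((1:ℝ)/n) ^ ρ := by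
      rw [hεdef, Real.rpow_add (by positivity), Real.rpow_natCast]
    rw [hsplit]
    apply mul_le_mul (pow_le_pow_left₀ (norm_nonneg _) hnorm r)
      (Real.rpow_le_rpow (norm_nonneg _) hnorm hρ.le)
      (Real.rpow_nonneg (norm_nonneg _) _) (by positivity)
  have h1 : ∀ i, |sSup (f '' K i) - sSup (W i '' K i)| ≤ ε := fun i =>
    my_sup_lemma (hKne i) (hKcomp i) (hfcont.mono (hKsub i)) (hWcont i) (hTay i)
  have h2 : ∀ i, |sSup (f '' K i) - mt i| ≤ 2 * ε := by
    intro i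
    have := abs_sub_le (sSup (f '' K i)) (sSup (W i '' K i)) (mt i)
    have h3 := hmt' i
    rw [abs_sub_comm (mt i)] at h3
    linarith [h1 i]
  set M : ℝ := sSup (f '' Set.Icc (0 : Fin d → ℝ) 1) with hMdef
  have hIccne : (Set.Icc (0 : Fin d → ℝ) 1).Nonempty := ⟨0, le_refl _, zero_le_one⟩
  have hIcccomp : IsCompact (Set.Icc (0 : Fin d → ℝ) 1) := isCompact_Icc
  have hfIc : IsCompact (f '' Set.Icc (0 : Fin d → ℝ) 1) :=
    hIcccomp.image_of_continuousOn hfcont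
  have hsupK : ∀ i, sSup (f '' K i) ≤ M := by
    intro i
    apply csSup_le_csSup hfIc.bddAbove ((hKne i).image f)
    exact Set.image_mono (hKsub i)
  have hNe : Nonempty (Fin d → Fin n) := ⟨fun _ => ⟨0, by omega⟩⟩
  have hrne : (Set.range mt).Nonempty := Set.range_nonempty mt
  have hrbdd : BddAbove (Set.range mt) := (Set.finite_range mt).bddAbove
  have hupper : sSup (Set.range mt) ≤ M + 2 * ε := by
    apply csSup_le hrne
    rintro _ ⟨i, rfl⟩
    have h3 := (abs_le.mp (h2 i)).1
    linarith [hsupK i]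
  have hlower : M ≤ sSup (Set.range mt) + 2 * ε := by
    obtain ⟨x, hx, hxe⟩ := hfIc.sSup_mem (hIccne.image f)
    obtain ⟨i, hxK⟩ := my_exists_cube hn hx
    have h4 : f x ≤ sSup (f '' K i) :=
      le_csSup ((hKcomp i).image_of_continuousOn (hfcont.mono (hKsub i))).bddAbove
        ⟨x, hxK, rfl⟩
    have h5 := (abs_le.mp (h2 i)).2
    have h6 : mt i ≤ sSup (Set.range mt) := le_csSup hrbdd ⟨i, rfl⟩
    have : M = f x := hxe.symm
    linarith
  rw [abs_le]
  constructor <;> [linarith; linarith]
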